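/- Let (s,t) be an edge with s<t. Suppose an execution contains a transition C_0 ↦ C_1 in which s executes the rule Seduction(t), and a transition C_2 ↦ C_3 with C_1 ↦* C_2 in which s executes a t-Reset, and s executes no Reset in any transition strictly between C_1 and C_2. Then t executes the rule Write(s) in some transition occurring between C_0 and C_2. -/
import Mathlib


/-!
Formal model of the self-stabilizing maximal-matching algorithm in the
link-register model under read/write atomicity.

Nodes form a finite simple graph `G` on a vertex type `V` whose linear order
plays the role of the distinct identifiers.  A configuration records, for each
node `u`, its pointer `p u : Option V` (`none` = null), its lock variable
`m u : Fin 3`, and for each (directed) link a register `r u v : RegFlag × Fin 3`.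
-/

inductive RegFlag where
  | Idle | You | Other
deriving DecidableEq

abbrev RegVal : Type := RegFlag × Fin 3

inductive Rule (V : Type) where
  | write (a : V)
  | seduction (a : V)
  | marriage (a : V)
  | increase
  | reset
deriving DecidableEq

structure Config (V : Type) where
  p : V → Option V
  m : V → Fin 3
  r : V → V → RegVal

variable {V : Type}

def correctRegisterValue [DecidableEq V] (C : Config V) (u a : V) : RegVal :=
  match C.p u with
  | none => (RegFlag.Idle, 0)
  | some b => if b = a then (RegFlag.You, C.m u) else (RegFlag.Other, C.m u)

def PRabandonment [LinearOrder V] (C : Config V) (u : V) : Prop :=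
  ∃ v, C.p u = some v ∧
    (((C.r v u).1 ≠ RegFlag.You ∧ (v < u ∨ C.m u ≠ 0)) ∨
     (C.r v u = (RegFlag.Other, 2) ∧ u < v))

def PRreset [LinearOrder V] (C : Config V) (u : V) : Prop :=
  ∃ v, C.p u = some v ∧ (C.r v u).1 = RegFlag.You ∧
    ((C.m u = 0 ∧ (C.r v u).2 = 2) ∨
     (C.m u = 2 ∧ (C.r v u).2 = 0) ∨
     (C.m u = 0 ∧ (C.r v u).2 = 1 ∧ v < u) ∨
     (C.m u = 1 ∧ (C.r v u).2 = 0 ∧ u < v) ∨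
     (C.m u = 1 ∧ (C.r v u).2 = 2 ∧ u < v) ∨
     (C.m u = 2 ∧ (C.r v u).2 = 1 ∧ v < u))

/-- The guard of each rule of node `u` in configuration `C`. -/
def eligible [LinearOrder V] (G : SimpleGraph V) (C : Config V) (u : V) : Rule V → Prop
  | .write a => G.Adj u a ∧ C.r u a ≠ correctRegisterValue C u a
  | .seduction a => G.Adj u a ∧ C.p u = none ∧ C.r u a = correctRegisterValue C u a ∧
      C.r a u = (RegFlag.Idle, 0) ∧ u < a
  | .marriage a => G.Adj u a ∧ C.p u = none ∧ C.r u a = correctRegisterValue C u a ∧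
      C.r a u = (RegFlag.You, 0) ∧ a < u
  | .increase => ∃ v, C.p u = some v ∧ C.r u v = correctRegisterValue C u v ∧
      (C.r v u).1 = RegFlag.You ∧
      ((C.m u = 0 ∧ ((u < v ∧ (C.r v u).2 = 1) ∨ (v < u ∧ (C.r v u).2 = 0))) ∨
       (C.m u = 1 ∧ ((u < v ∧ (C.r v u).2 = 1) ∨ (v < u ∧ (C.r v u).2 = 2))))
  | .reset => ∃ v, C.p u = some v ∧ C.r u v = correctRegisterValue C u v ∧
      (PRabandonment C u ∨ PRreset C u)

/-- Simultaneous application of (at most) one rule per node.  `A u = some R`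
means node `u` executes rule `R`; each action only modifies the data owned by
the acting node. -/
def step [DecidableEq V] (C : Config V) (A : V → Option (Rule V)) : Config V where
  p u :=
    match A u with
    | some (Rule.seduction a) => some a
    | some (Rule.marriage a) => some a
    | some Rule.reset => none
    | _ => C.p u
  m u :=
    match A u with
    | some (Rule.seduction _) => 0
    | some (Rule.marriage _) => 0
    | some Rule.reset => 0
    | some Rule.increase => C.m u + 1
    | _ => C.m u
  r u a :=
    match A u with
    | some (Rule.write b) => if a = b then correctRegisterValue C u a else C.r u a
    | _ => C.r u a

/-- An execution `C_0, A_0, C_1, A_1, …, C_T`: at each transition `i < T`, a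
nonempty set of eligible rules (at most one per node) is executed
simultaneously. -/
structure Execution [LinearOrder V] (G : SimpleGraph V) where
  T : ℕ
  conf : ℕ → Config V
  act : ℕ → V → Option (Rule V)
  act_nonempty : ∀ i < T, ∃ u, (act i u).isSome
  act_eligible : ∀ i < T, ∀ u R, act i u = some R → eligible G (conf i) u R
  conf_succ : ∀ i < T, conf (i + 1) = step (conf i) (act i)

/-- A configuration is stable if no rule is eligible at any node. -/
def stableConfig [LinearOrder V] (G : SimpleGraph V) (C : Config V) : Prop :=
  ∀ u R, ¬ eligible G C u R

/-- The edge `(s,t)` (with `s < t` intended) is in state `(You, α, β)`. -/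
def edgeState (C : Config V) (s t : V) (α β : Fin 3) : Prop :=
  C.p s = some t ∧ C.p t = some s ∧ C.m s = α ∧ C.m t = β

def updatedCorrectState (C : Config V) (s t : V) (α β : Fin 3) : Prop :=
  edgeState C s t α β ∧ C.r s t = (RegFlag.You, α) ∧ C.r t s = (RegFlag.You, β) ∧
    ((α, β) = ((0 : Fin 3), (0 : Fin 3)) ∨ (α, β) = (0, 1) ∨ (α, β) = (1, 1) ∨
     (α, β) = (2, 1) ∨ (α, β) = (2, 2))

def toUpdateCorrectState (C : Config V) (s t : V) (α β : Fin 3) : Prop :=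
  edgeState C s t α β ∧
    ((((α, β) = ((0 : Fin 3), (1 : Fin 3)) ∨ (α, β) = (2, 2)) ∧
        C.r s t = (RegFlag.You, α) ∧ C.r t s = (RegFlag.You, β - 1)) ∨
     (((α, β) = ((1 : Fin 3), (1 : Fin 3)) ∨ (α, β) = (2, 1)) ∧
        C.r s t = (RegFlag.You, α - 1) ∧ C.r t s = (RegFlag.You, β)))

def correctState (C : Config V) (s t : V) (α β : Fin 3) : Prop :=
  updatedCorrectState C s t α β ∨ toUpdateCorrectState C s t α β

/-- Node `u` executes a `v`-rule in transition `k`: one of `Write(v)`,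
`Seduction(v)`, `Marriage(v)`, a `v`-`Increase` or a `v`-`Reset`. -/
def execVRule [LinearOrder V] {G : SimpleGraph V} (E : Execution G) (k : ℕ) (u v : V) : Prop :=
  k < E.T ∧
    (E.act k u = some (Rule.write v) ∨ E.act k u = some (Rule.seduction v) ∨
     E.act k u = some (Rule.marriage v) ∨
     ((E.act k u = some Rule.increase ∨ E.act k u = some Rule.reset) ∧
       (E.conf k).p u = some v))

/-- If `s` executes `Seduction(t)` in transition `i` and a
`t`-`Reset` in transition `j` (`i + 1 ≤ j`), with no `Reset` of `s` strictly in
between, then `t` executes `Write(s)` in some transition between `C_0 = conf i`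
and `C_2 = conf j`. -/
theorem stmt_18 {V : Type} [Fintype V] [LinearOrder V] (G : SimpleGraph V)
    (s t : V) (hadj : G.Adj s t) (hst : s < t) (E : Execution G)
    (i j : ℕ) (hij : i + 1 ≤ j) (hjT : j < E.T)
    (hi : E.act i s = some (Rule.seduction t))
    (hj : E.act j s = some Rule.reset) (hjp : (E.conf j).p s = some t)
    (hcons : ∀ k, i < k → k < j → E.act k s ≠ some Rule.reset) :
    ∃ k, i ≤ k ∧ k + 1 ≤ j ∧ E.act k t = some (Rule.write s) := by
  by_contra hcon
  push_neg at hcon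
  have hiT : i < E.T := by omega
  have hseg := E.act_eligible i hiT s _ hi
  obtain ⟨-, hpnone, -, hrts, -⟩ := hseg
  -- Invariant: for i+1 ≤ k ≤ j, p_s = some t, m_s = 0, r_{ts} = (Idle, 0)
  have key : ∀ k, i + 1 ≤ k → k ≤ j →
      (E.conf k).p s = some t ∧ (E.conf k).m s = 0 ∧
      (E.conf k).r t s = (RegFlag.Idle, 0) := by
    intro k
    induction k with
    | zero => omega
    | succ n ih =>
      intro hk1 hk2
      have hnT : n < E.T := by omega
      have hstep := E.conf_succ n hnT
      have hrts' : (E.conf (n+1)).r t s = (E.conf n).r t s := by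
        have hne : E.act n t ≠ some (Rule.write s) := hcon n (by omega) (by omega)
        rw [hstep]
        show (match E.act n t with
          | some (Rule.write b) =>
              if s = b then correctRegisterValue (E.conf n) t s else (E.conf n).r t s
          | _ => (E.conf n).r t s) = (E.conf n).r t s
        rcases hAt : E.act n t with _ | R
        · rfl
        · rcases R with b | b | b | _ | _
          · have hb : s ≠ b := by
              intro h; subst h; exact hne hAt
            simp [hb]
          all_goals rfl
      by_cases hni : n < i + 1
      · -- base case: n = i
        have hn : n = i := by omega
        subst hn
        refine ⟨?_, ?_, ?_⟩
        · rw [hstep]; simp [step, hi]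
        · rw [hstep]; simp [step, hi]
        · rw [hrts']; exact hrts
      · -- inductive step: i + 1 ≤ n
        obtain ⟨hp, hm, hr⟩ := ih (by omega) (by omega)
        have hps : (E.conf (n+1)).p s = (E.conf n).p s ∧
            (E.conf (n+1)).m s = (E.conf n).m s := by
          rw [hstep]
          rcases hAs : E.act n s with _ | R
          · simp [step, hAs]
          · have helig := E.act_eligible n hnT s _ hAs
            rcases R with b | b | b | _ | _
            · simp [step, hAs]
            · obtain ⟨-, hpn, -⟩ := helig
              rw [hp] at hpn; exact absurd hpn (by simp)
            · obtain ⟨-, hpn, -⟩ := helig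
              rw [hp] at hpn; exact absurd hpn (by simp)
            · -- increase: needs r_{ts}.1 = You, contradiction
              obtain ⟨v, hpv, -, hYou, -⟩ := helig
              rw [hp] at hpv
              replace hpv := hpv.symm
              injection hpv with hv
              subst hv
              rw [hr] at hYou
              exact absurd hYou (by simp)
            · -- reset: excluded by hcons
              exact absurd hAs (hcons n (by omega) (by omega))
        exact ⟨hps.1.trans hp, hps.2.trans hm, hrts'.trans hr⟩
  obtain ⟨hp, hm, hr⟩ := key j hij le_rfl
  -- Now the reset guard at j is violated
  have helig := E.act_eligible j hjT s _ hj
  obtain ⟨v, hpv, -, hPR⟩ := helig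
  rcases hPR with ⟨w, hw, hcase⟩ | ⟨w, hw, hYou, -⟩
  · rw [hp] at hw
    injection hw with hwt
    subst hwt
    rw [hr] at hcase
    rcases hcase with ⟨-, habs⟩ | ⟨habs, -⟩
    · rcases habs with h | h
      · exact absurd h (by exact absurd (h.trans hst) (lt_irrefl _))
      · exact h hm
    · exact absurd habs (by simp)
  · rw [hp] at hw
    injection hw with hwt
    subst hwt
    rw [hr] at hYou
    exact absurd hYou (by simp)
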